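/- arXiv:2603.26503 — 3 statements merged into one kernel-verified Lean document; each statement's English description precedes it below -/
import Mathlib

section
/- Let K be a closed convex cone in ℝ^m and let z : ℝ → K and λ : ℝ → K° be continuously differentiable curves such that λ(t) ∈ N_K(z(t)) for all t. Then ⟨λ'(t), z(t)⟩ = 0 and ⟨λ(t), z'(t)⟩ = 0 for all t. -/
open RealInnerProductSpace

/-- Complementarity along C¹ curves: if `z : ℝ → K` and `l : ℝ → K°` are C¹ with
`l t ∈ N_K(z t)` (i.e. `l t ∈ K°` and `⟪l t, z t⟫ = 0`) for all `t`, then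
`⟪l'(t), z(t)⟫ = 0` and `⟪l(t), z'(t)⟫ = 0` for all `t`. -/
theorem complementarity_along_curves
    (m : ℕ) (K : Set (EuclideanSpace ℝ (Fin m)))
    (hne : K.Nonempty) (hclosed : IsClosed K) (hconv : Convex ℝ K)
    (hcone : ∀ (c : ℝ), 0 ≤ c → ∀ x ∈ K, c • x ∈ K)
    (z l : ℝ → EuclideanSpace ℝ (Fin m))
    (hz : ContDiff ℝ 1 z) (hl : ContDiff ℝ 1 l)
    (hzK : ∀ t, z t ∈ K)
    (hlpolar : ∀ t, ∀ y ∈ K, ⟪l t, y⟫ ≤ 0)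
    (hcompl : ∀ t, ⟪l t, z t⟫ = 0) :
    ∀ t, ⟪deriv l t, z t⟫ = 0 ∧ ⟪l t, deriv z t⟫ = 0 := by
  intro t
  have hld : ∀ s, HasDerivAt l (deriv l s) s :=
    fun s => ((hl.differentiable one_ne_zero) s).hasDerivAt
  have hzd : ∀ s, HasDerivAt z (deriv z s) s :=
    fun s => ((hz.differentiable one_ne_zero) s).hasDerivAt
  constructor
  · -- s ↦ ⟪l s, z t⟫ has a global max at s = t
    have hd : HasDerivAt (fun s => ⟪l s, z t⟫) (⟪l t, (0 : EuclideanSpace ℝ (Fin m))⟫ + ⟪deriv l t, z t⟫) t :=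
      (hld t).inner ℝ (hasDerivAt_const t (z t))
    have hmax : IsLocalMax (fun s => ⟪l s, z t⟫) t := by
      apply IsMaxOn.isLocalMax (s := Set.univ)
      · intro s _
        simpa [hcompl t] using hlpolar s (z t) (hzK t)
      · exact Filter.univ_mem
    have := hmax.hasDerivAt_eq_zero hd
    simpa using this
  · have hd : HasDerivAt (fun s => ⟪l t, z s⟫) (⟪l t, deriv z t⟫ + ⟪(0 : EuclideanSpace ℝ (Fin m)), z t⟫) t :=
      (hasDerivAt_const t (l t)).inner ℝ (hzd t)
    have hmax : IsLocalMax (fun s => ⟪l t, z s⟫) t := by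
      apply IsMaxOn.isLocalMax (s := Set.univ)
      · intro s _
        simpa [hcompl t] using hlpolar t (z s) (hzK s)
      · exact Filter.univ_mem
    have := hmax.hasDerivAt_eq_zero hd
    simpa using this
end

section
/- Let K be a closed convex cone in ℝ^m and λ ∈ K°. Then the tangent cone to K° at λ equals the polar cone of the set {u ∈ K : ⟨u, λ⟩ = 0}. -/
open RealInnerProductSpace

def Set.innerDualCone {H : Type*} [NormedAddCommGroup H] [InnerProductSpace ℝ H] (s : Set H) :
    ConvexCone ℝ H where
  carrier := {y | ∀ x ∈ s, 0 ≤ ⟪x, y⟫}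
  smul_mem' c hc y hy x hx := by rw [real_inner_smul_right]; exact mul_nonneg hc.le (hy x hx)
  add_mem' u hu v hv x hx := by rw [inner_add_right]; exact add_nonneg (hu x hx) (hv x hx)

theorem mem_innerDualCone {H : Type*} [NormedAddCommGroup H] [InnerProductSpace ℝ H]
    (y : H) (s : Set H) : y ∈ s.innerDualCone ↔ ∀ x ∈ s, 0 ≤ ⟪x, y⟫ := Iff.rfl

theorem ConvexCone.innerDualCone_of_innerDualCone_eq_self {H : Type*} [NormedAddCommGroup H]
    [InnerProductSpace ℝ H] [CompleteSpace H] (K : ConvexCone ℝ H) (ne : (K : Set H).Nonempty)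
    (hc : IsClosed (K : Set H)) :
    ((K : Set H).innerDualCone : Set H).innerDualCone = K := by
  have hP : K.Pointed := by
    obtain ⟨x, hx⟩ := ne
    have ht : Filter.Tendsto (fun n : ℕ => (1 / ((n:ℝ) + 1)) • x) Filter.atTop (nhds 0) := by
      have h0 : Filter.Tendsto (fun n : ℕ => 1 / ((n:ℝ) + 1)) Filter.atTop (nhds 0) :=
        tendsto_one_div_add_atTop_nhds_zero_nat
      simpa using h0.smul_const x
    exact hc.mem_of_tendsto ht (Filter.Eventually.of_forall fun n => K.smul_mem (by positivity) hx)
  let P : ProperCone ℝ H := { toSubmodule := K.toPointedCone hP, isClosed' := hc }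
  ext y
  constructor
  · intro hy
    by_contra hyK
    obtain ⟨z, hz, hyz⟩ := P.hyperplane_separation' (x₀ := y) hyK
    have hzK : z ∈ (K : Set H).innerDualCone := fun x hx => hz x hx
    have := hy z hzK
    rw [real_inner_comm] at this
    linarith
  · intro hy x hx
    rw [real_inner_comm]
    exact hx y hy

/-- For a nonempty closed convex cone `K ⊆ ℝ^m` and `l ∈ K°`, the tangent cone to `K°`
at `l` equals the polar cone of `{u ∈ K : ⟪u, l⟫ = 0}`. -/
theorem tangent_cone_polar_at_point
    (m : ℕ) (K : Set (EuclideanSpace ℝ (Fin m)))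
    (hne : K.Nonempty) (hclosed : IsClosed K) (hconv : Convex ℝ K)
    (hcone : ∀ (c : ℝ), 0 ≤ c → ∀ x ∈ K, c • x ∈ K)
    (l : EuclideanSpace ℝ (Fin m))
    (hl : ∀ y ∈ K, ⟪l, y⟫ ≤ 0) :
    closure {d : EuclideanSpace ℝ (Fin m) |
        ∃ c : ℝ, 0 ≤ c ∧ ∃ y ∈ {x | ∀ u ∈ K, ⟪x, u⟫ ≤ 0}, d = c • (y - l)}
      = {d : EuclideanSpace ℝ (Fin m) | ∀ u, u ∈ K → ⟪u, l⟫ = 0 → ⟪d, u⟫ ≤ 0} := by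
  set Kd : Set (EuclideanSpace ℝ (Fin m)) := {x | ∀ u ∈ K, ⟪x, u⟫ ≤ 0} with hKd
  set A : Set (EuclideanSpace ℝ (Fin m)) := {d | ∃ c : ℝ, 0 ≤ c ∧ ∃ y ∈ Kd, d = c • (y - l)} with hA
  -- `K` as a convex cone
  set KC : ConvexCone ℝ (EuclideanSpace ℝ (Fin m)) :=
    { carrier := K
      smul_mem' := fun c hc x hx => hcone c hc.le x hx
      add_mem' := fun x hx y hy => by
        have := hconv hx hy (by norm_num : (0:ℝ) ≤ 1/2) (by norm_num : (0:ℝ) ≤ 1/2)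
          (by norm_num)
        have h2 := hcone 2 (by norm_num) _ this
        have e : (2:ℝ) • ((1/2 : ℝ) • x + (1/2 : ℝ) • y) = x + y := by module
        rwa [e] at h2 } with hKC
  -- `A` as a convex cone
  have hKdconv : ∀ a b : ℝ, 0 ≤ a → 0 ≤ b → ∀ y₁ ∈ Kd, ∀ y₂ ∈ Kd,
      a • y₁ + b • y₂ ∈ Kd ∨ True := fun _ _ _ _ _ _ _ _ => Or.inr trivial
  have hKdmem : ∀ a b : ℝ, 0 ≤ a → 0 ≤ b → ∀ y₁ ∈ Kd, ∀ y₂ ∈ Kd,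
      a • y₁ + b • y₂ ∈ Kd := by
    intro a b ha hb y₁ h₁ y₂ h₂ u hu
    have e : ⟪a • y₁ + b • y₂, u⟫ = a * ⟪y₁, u⟫ + b * ⟪y₂, u⟫ := by
      rw [inner_add_left, real_inner_smul_left, real_inner_smul_left]
    rw [e]
    have := mul_nonpos_of_nonneg_of_nonpos ha (h₁ u hu)
    have := mul_nonpos_of_nonneg_of_nonpos hb (h₂ u hu)
    linarith
  have h0Kd : (0 : EuclideanSpace ℝ (Fin m)) ∈ Kd := by
    intro u hu; rw [inner_zero_left]
  set AC : ConvexCone ℝ (EuclideanSpace ℝ (Fin m)) :=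
    { carrier := A
      smul_mem' := by
        rintro c hc d ⟨c', hc', y, hy, rfl⟩
        exact ⟨c * c', mul_nonneg hc.le hc', y, hy, smul_smul c c' _⟩
      add_mem' := by
        rintro d₁ ⟨c₁, hc₁, y₁, hy₁, rfl⟩ d₂ ⟨c₂, hc₂, y₂, hy₂, rfl⟩
        rcases eq_or_lt_of_le (by positivity : (0:ℝ) ≤ c₁ + c₂) with h | h
        · have hc₁0 : c₁ = 0 := by linarith
          have hc₂0 : c₂ = 0 := by linarith
          exact ⟨0, le_refl 0, y₁, hy₁, by
            simp [hc₁0, hc₂0]⟩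
        · refine ⟨c₁ + c₂, le_of_lt h, (c₁ / (c₁ + c₂)) • y₁ + (c₂ / (c₁ + c₂)) • y₂,
            hKdmem _ _ (by positivity) (by positivity) _ hy₁ _ hy₂, ?_⟩
          have hne' : (c₁ + c₂) ≠ 0 := ne_of_gt h
          match_scalars <;> field_simp <;> ring } with hAC
  have hAcoe : (AC : Set (EuclideanSpace ℝ (Fin m))) = A := rfl
  set C : ConvexCone ℝ (EuclideanSpace ℝ (Fin m)) := AC.closure with hC
  have hCcoe : ((C : Set (EuclideanSpace ℝ (Fin m)))) = closure A := rfl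
  -- target
  ext d
  simp only [Set.mem_setOf_eq, ← hA]
  rw [show closure A = ((C : Set (EuclideanSpace ℝ (Fin m)))) from rfl]
  constructor
  · -- easy direction : closure A ⊆ T
    intro hd u hu hul
    have hT : IsClosed {d : EuclideanSpace ℝ (Fin m) | ⟪d, u⟫ ≤ 0} :=
      isClosed_le (continuous_id.inner continuous_const) continuous_const
    have hsub : A ⊆ {d : EuclideanSpace ℝ (Fin m) | ⟪d, u⟫ ≤ 0} := by
      rintro _ ⟨c, hc, y, hy, rfl⟩
      have := hy u hu
      have e : ⟪c • (y - l), u⟫ = c * (⟪y, u⟫ - ⟪l, u⟫) := by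
        rw [real_inner_smul_left, inner_sub_left]
      have h1 : ⟪l, u⟫ = (0:ℝ) := by rw [real_inner_comm]; exact hul
      rw [Set.mem_setOf_eq, e, h1, sub_zero]
      exact mul_nonpos_of_nonneg_of_nonpos hc (hy u hu)
    exact closure_minimal hsub hT hd
  · -- hard direction via bipolar theorem
    intro hd
    have hCne : ((C : Set (EuclideanSpace ℝ (Fin m)))).Nonempty :=
      ⟨0, subset_closure ⟨0, le_refl 0, 0, h0Kd, by simp⟩⟩
    have hCclosed : IsClosed ((C : Set (EuclideanSpace ℝ (Fin m)))) := isClosed_closure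
    have bipolarC := ConvexCone.innerDualCone_of_innerDualCone_eq_self C hCne hCclosed
    have hKne : (KC : Set (EuclideanSpace ℝ (Fin m))).Nonempty := hne
    have hKclosed : IsClosed (KC : Set (EuclideanSpace ℝ (Fin m))) := hclosed
    have bipolarK := ConvexCone.innerDualCone_of_innerDualCone_eq_self KC hKne hKclosed
    suffices hsuf : d ∈ (((C : Set (EuclideanSpace ℝ (Fin m))).innerDualCone :
        Set (EuclideanSpace ℝ (Fin m)))).innerDualCone by
      rw [bipolarC] at hsuf; exact hsuf
    rw [mem_innerDualCone]
    intro z hz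
    rw [SetLike.mem_coe, mem_innerDualCone] at hz
    -- z satisfies : ∀ x ∈ closure A, 0 ≤ ⟪x, z⟫ ; in particular for x ∈ A
    have hzA : ∀ x ∈ A, (0:ℝ) ≤ ⟪x, z⟫ := fun x hx => hz x (subset_closure hx)
    -- deduce ⟪l, z⟫ = 0
    have h2l : (2:ℝ) • l ∈ Kd := by
      intro u hu
      rw [real_inner_smul_left]
      exact mul_nonpos_of_nonneg_of_nonpos (by norm_num) (hl u hu)
    have hl1 : (0:ℝ) ≤ ⟪(0:EuclideanSpace ℝ (Fin m)) - l, z⟫ := by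
      exact hzA _ ⟨1, zero_le_one, 0, h0Kd, (one_smul ℝ _).symm⟩
    have hl2 : (0:ℝ) ≤ ⟪(2:ℝ) • l - l, z⟫ := by
      exact hzA _ ⟨1, zero_le_one, (2:ℝ) • l, h2l, (one_smul ℝ _).symm⟩
    have hlz : ⟪l, z⟫ = 0 := by
      rw [inner_sub_left, inner_zero_left] at hl1
      rw [inner_sub_left, real_inner_smul_left] at hl2
      linarith
    -- deduce -z ∈ K via bipolar of K
    have hnzK : -z ∈ K := by
      have : -z ∈ ((KC : Set (EuclideanSpace ℝ (Fin m))).innerDualCone : Set (EuclideanSpace ℝ (Fin m))).innerDualCone := by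
        rw [mem_innerDualCone]
        intro w hw
        rw [SetLike.mem_coe, mem_innerDualCone] at hw
        -- -w ∈ Kd
        have hwKd : -w ∈ Kd := by
          intro u hu
          have := hw u hu
          rw [inner_neg_left]; linarith [real_inner_comm u w]
        have := hzA _ ⟨1, zero_le_one, -w, hwKd, (one_smul ℝ _).symm⟩
        rw [inner_sub_left, inner_neg_left, hlz] at this
        rw [real_inner_comm, inner_neg_left]
        linarith [real_inner_comm w z]
      rwa [bipolarK] at this
    -- ⟪-z, l⟫ = 0 hence by hd : ⟪d, -z⟫ ≤ 0
    have hnzl : ⟪-z, l⟫ = 0 := by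
      rw [inner_neg_left, real_inner_comm, hlz, neg_zero]
    have := hd (-z) hnzK hnzl
    rw [inner_neg_right] at this
    linarith [real_inner_comm z d]
end

section
/- Let F : ℝ^n × ℝ^q → ℝ be continuous and let Sol : ℝ^q ⇉ ℝ^n be a set-valued map with nonempty values, closed graph, and locally bounded (for every θ there is a neighborhood N of θ and r > 0 with Sol(θ') ⊆ closedBall(0, r) for all θ' ∈ N), such that F(x, θ) = F(x', θ) for all x, x' ∈ Sol(θ). Then the value function f(θ) := F(x, θ) for any x ∈ Sol(θ) is continuous on ℝ^q. -/
open Filter Topology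

/-- Continuity of the value function: if `F` is continuous and `Sol` has nonempty values,
closed graph, is locally bounded, and `F` is constant on `Sol(θ)` for each `θ`, then
the value function `f(θ) = F(x, θ)` (for any `x ∈ Sol(θ)`) is continuous. -/
theorem value_function_continuous
    (n q : ℕ)
    (F : EuclideanSpace ℝ (Fin n) × EuclideanSpace ℝ (Fin q) → ℝ)
    (hF : Continuous F)
    (Sol : EuclideanSpace ℝ (Fin q) → Set (EuclideanSpace ℝ (Fin n)))
    (hne : ∀ θ, (Sol θ).Nonempty)
    (hclosed : IsClosed {p : EuclideanSpace ℝ (Fin q) × EuclideanSpace ℝ (Fin n) |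
      p.2 ∈ Sol p.1})
    (hlocbdd : ∀ θ, ∃ N ∈ nhds θ, ∃ r > (0:ℝ),
      ∀ θ' ∈ N, Sol θ' ⊆ Metric.closedBall 0 r)
    (hconst : ∀ θ, ∀ x ∈ Sol θ, ∀ x' ∈ Sol θ, F (x, θ) = F (x', θ))
    (f : EuclideanSpace ℝ (Fin q) → ℝ)
    (hf : ∀ θ, ∀ x ∈ Sol θ, f θ = F (x, θ)) :
    Continuous f := by
  apply continuous_iff_seqContinuous.mpr
  intro u θ hu
  obtain ⟨N, hN, r, hr, hbdd⟩ := hlocbdd θ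
  choose x hx using fun k => hne (u k)
  apply Filter.tendsto_of_subseq_tendsto
  intro ns hns
  have hu' : Tendsto (fun k => u (ns k)) atTop (𝓝 θ) := hu.comp hns
  have hev : ∀ᶠ k in atTop, x (ns k) ∈ Metric.closedBall 0 r := by
    filter_upwards [hu' hN] with k hk using hbdd _ hk (hx _)
  obtain ⟨a, ha, φ, hφ, hconv⟩ :=
    (isCompact_closedBall (0 : EuclideanSpace ℝ (Fin n)) r).tendsto_subseq' hev.frequently
  have hθφ : Tendsto (fun k => u (ns (φ k))) atTop (𝓝 θ) := hu'.comp hφ.tendsto_atTop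
  have hmem : a ∈ Sol θ := by
    have hpair : Tendsto (fun k => (u (ns (φ k)), x (ns (φ k)))) atTop (𝓝 (θ, a)) :=
      hθφ.prodMk_nhds hconv
    exact hclosed.mem_of_tendsto hpair (Eventually.of_forall fun k => hx _)
  refine ⟨φ, ?_⟩
  have hlim : Tendsto (fun k => F (x (ns (φ k)), u (ns (φ k)))) atTop (𝓝 (F (a, θ))) :=
    (hF.tendsto _).comp (hconv.prodMk_nhds hθφ)
  have heq : ∀ k, (f ∘ u) (ns (φ k)) = F (x (ns (φ k)), u (ns (φ k))) :=
    fun k => hf _ _ (hx _)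
  rw [hf θ a hmem]
  exact hlim.congr fun k => (heq k).symm
end
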